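/- For any fixed nonzero vector c in F_2^{2N}, if a symplectic self-dual subspace C of F_2^{2N} is chosen uniformly at random, then the probability that c ∈ C equals 1/(2^N + 1). -/

import Mathlib

/-! Symplectic transvections `x ↦ x + a B(x, w) w` act transitively on the nonzero vectors of a
nondegenerate alternating space, so the number `m` of Lagrangians through a vector `c ≠ 0` does not
depend on `c`. Over `𝔽_q` in dimension `2n`, every Lagrangian has `q ^ n` elements, and counting the
pairs `(x, C)` with `x ≠ 0` in a Lagrangian `C` gives `(q ^ (2n) - 1) m = L (q ^ n - 1)`, where `L`
is the number of Lagrangians; hence `L = (q ^ n + 1) m`. For the standard form on `𝔽₂^(2N)` the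
subspace on which every second coordinate vanishes is Lagrangian, so `L ≠ 0`. -/

/-- `F_2^{2N}`, grouped into `N` blocks of two coordinates. -/
abbrev V (N : ℕ) := Fin N → ZMod 2 × ZMod 2

/-- The standard symplectic product `u ⊙ v = uᵀ P v` on `F_2^{2N}`, where `P` is
block-diagonal with `N` antidiagonal `2×2` blocks. -/
def symp {N : ℕ} (u v : V N) : ZMod 2 :=
  ∑ n, ((u n).1 * (v n).2 + (u n).2 * (v n).1)

/-- The symplectic dual `C^⊥ = {u : ∀ v ∈ C, u ⊙ v = 0}` of a subspace `C ⊆ F_2^{2N}`. -/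
def sympDual {N : ℕ} (C : Submodule (ZMod 2) (V N)) : Submodule (ZMod 2) (V N) where
  carrier := {u | ∀ v ∈ C, symp u v = 0}
  zero_mem' := by intro v hv; simp [symp]
  add_mem' := by
    intro a b ha hb v hv
    have h : symp (a + b) v = symp a v + symp b v := by
      simp only [symp, ← Finset.sum_add_distrib]
      refine Finset.sum_congr rfl fun n _ => ?_
      simp [Prod.fst_add, Prod.snd_add]; ring
    rw [h, ha v hv, hb v hv, add_zero]
  smul_mem' := by
    intro c u hu v hv
    have h : symp (c • u) v = c * symp u v := by
      simp only [symp, Finset.mul_sum]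
      refine Finset.sum_congr rfl fun n _ => ?_
      simp [Prod.smul_fst, Prod.smul_snd, smul_eq_mul]; ring
    rw [h, hu v hv, mul_zero]

open Module

namespace LinearMap
namespace BilinForm

variable {K M : Type*} [Field K] [AddCommGroup M] [Module K M] {B : LinearMap.BilinForm K M}

def IsLagrangian (B : LinearMap.BilinForm K M) (C : Submodule K M) : Prop := C = B.orthogonal C

def symplecticTransvection (hB : B.IsAlt) (a : K) (w : M) : M ≃ₗ[K] M :=
  LinearEquiv.transvection (f := a • B.flip w) (v := w) (by simp [hB.self_eq_zero])

lemma symplecticTransvection_apply (hB : B.IsAlt) (a : K) (w x : M) :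
    symplecticTransvection hB a w x = x + (a * B x w) • w := rfl

lemma apply_symplecticTransvection (hB : B.IsAlt) (a : K) (w x y : M) :
    B (symplecticTransvection hB a w x) (symplecticTransvection hB a w y) = B x y := by
  simp only [symplecticTransvection_apply, map_add, map_smul, LinearMap.add_apply,
    LinearMap.smul_apply, smul_eq_mul, hB.self_eq_zero, ← hB.neg_eq w y]
  ring

lemma exists_isometry_apply_eq_of_apply_ne_zero (hB : B.IsAlt) {c c' : M} (h : B c c' ≠ 0) :
    ∃ f : M ≃ₗ[K] M, (∀ x y, B (f x) (f y) = B x y) ∧ f c = c' := by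
  refine ⟨symplecticTransvection hB (B c c')⁻¹ (c' - c), apply_symplecticTransvection hB _ _, ?_⟩
  rw [symplecticTransvection_apply, map_sub, hB.self_eq_zero, sub_zero, inv_mul_cancel₀ h,
    one_smul, add_sub_cancel]

lemma exists_apply_ne_zero_and_apply_ne_zero (hB : B.SeparatingLeft) {c c' : M} (hc : c ≠ 0)
    (hc' : c' ≠ 0) : ∃ w, B c w ≠ 0 ∧ B c' w ≠ 0 := by
  have exists_ne : ∀ {u : M}, u ≠ 0 → ∃ w, B u w ≠ 0 := fun hu => by
    simpa using mt (hB _) hu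
  obtain ⟨v, hv⟩ := exists_ne hc
  obtain ⟨v', hv'⟩ := exists_ne hc'
  by_cases h : B c' v = 0
  · by_cases h' : B c v' = 0
    · exact ⟨v + v', by simpa [h'], by simpa [h]⟩
    · exact ⟨v', h', hv'⟩
  · exact ⟨v, hv, h⟩

theorem exists_isometry_apply_eq (hB : B.IsAlt) (hsep : B.SeparatingLeft) {c c' : M}
    (hc : c ≠ 0) (hc' : c' ≠ 0) :
    ∃ f : M ≃ₗ[K] M, (∀ x y, B (f x) (f y) = B x y) ∧ f c = c' := by
  obtain ⟨w, hcw, hc'w⟩ := exists_apply_ne_zero_and_apply_ne_zero hsep hc hc'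
  obtain ⟨f, hf, rfl⟩ := exists_isometry_apply_eq_of_apply_ne_zero hB hcw
  obtain ⟨g, hg, rfl⟩ := exists_isometry_apply_eq_of_apply_ne_zero hB
    (c := f c) (c' := c') (by rwa [← hB.neg_eq, neg_ne_zero])
  exact ⟨f.trans g, fun x y => (hg _ _).trans (hf x y), rfl⟩

lemma orthogonal_map {f : M ≃ₗ[K] M} (hf : ∀ x y, B (f x) (f y) = B x y) (C : Submodule K M) :
    B.orthogonal (C.map (f : M →ₗ[K] M)) = (B.orthogonal C).map (f : M →ₗ[K] M) := by
  ext x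
  obtain ⟨y, rfl⟩ := f.surjective x
  simp only [mem_orthogonal_iff, Submodule.mem_map_equiv, f.symm_apply_apply]
  rw [← f.forall_congr_right]
  simp [hf]

lemma isLagrangian_map_iff {f : M ≃ₗ[K] M} (hf : ∀ x y, B (f x) (f y) = B x y)
    {C : Submodule K M} : B.IsLagrangian (C.map (f : M →ₗ[K] M)) ↔ B.IsLagrangian C := by
  rw [IsLagrangian, IsLagrangian, orthogonal_map hf,
    (Submodule.map_injective_of_injective f.injective).eq_iff]

theorem card_isLagrangian_mem_eq (hB : B.IsAlt) (hsep : B.SeparatingLeft) {c c' : M}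
    (hc : c ≠ 0) (hc' : c' ≠ 0) :
    Nat.card {C // B.IsLagrangian C ∧ c ∈ C} = Nat.card {C // B.IsLagrangian C ∧ c' ∈ C} := by
  obtain ⟨f, hf, rfl⟩ := exists_isometry_apply_eq hB hsep hc hc'
  refine Nat.card_congr ((Submodule.orderIsoMapComap f).toEquiv.subtypeEquiv fun C => ?_)
  simp [isLagrangian_map_iff hf, Submodule.mem_map_equiv]

lemma IsLagrangian.two_mul_finrank [FiniteDimensional K M] (hB : B.Nondegenerate)
    {C : Submodule K M} (hC : B.IsLagrangian C) : 2 * finrank K C = finrank K M := by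
  have h := finrank_orthogonal hB C
  rw [← hC] at h
  have := Submodule.finrank_le C
  omega

lemma IsLagrangian.card_eq [FiniteDimensional K M] (hB : B.Nondegenerate) {n : ℕ}
    (hM : finrank K M = 2 * n) {C : Submodule K M} (hC : B.IsLagrangian C) :
    Nat.card C = Nat.card K ^ n := by
  have := hC.two_mul_finrank hB
  rw [natCard_eq_pow_finrank (K := K)]
  congr 1
  omega

theorem pow_sub_one_mul_card_isLagrangian_mem [Finite K] [FiniteDimensional K M] (hB : B.IsAlt)
    (hnd : B.Nondegenerate) {n : ℕ} (hM : finrank K M = 2 * n) {c : M} (hc : c ≠ 0) :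
    (Nat.card K ^ (2 * n) - 1) * Nat.card {C // B.IsLagrangian C ∧ c ∈ C} =
      Nat.card {C // B.IsLagrangian C} * (Nat.card K ^ n - 1) := by
  classical
  have : Finite M := Module.finite_of_finite K
  have : Fintype M := Fintype.ofFinite M
  have : Fintype (Submodule K M) := Fintype.ofFinite _
  have hpairs := Finset.card_mul_eq_card_mul (fun (x : M) (C : Submodule K M) => x ∈ C)
    (s := {0}ᶜ) (t := {C | B.IsLagrangian C}) (m := Nat.card {C // B.IsLagrangian C ∧ c ∈ C})
    (n := Nat.card K ^ n - 1) ?_ ?_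
  · rwa [Finset.card_compl, Finset.card_singleton, Fintype.card_eq_nat_card,
      natCard_eq_pow_finrank (K := K), hM, ← Fintype.card_subtype,
      ← Nat.card_eq_fintype_card] at hpairs
  · intro x hx
    rw [Finset.bipartiteAbove, Finset.filter_filter, ← Fintype.card_subtype,
      ← Nat.card_eq_fintype_card]
    exact card_isLagrangian_mem_eq hB hnd.1 (by simpa using hx) hc
  · intro C hC
    rw [Finset.bipartiteBelow, Finset.compl_singleton, Finset.filter_erase,
      Finset.card_erase_of_mem (by simp), ← Fintype.card_subtype, ← Nat.card_eq_fintype_card]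
    exact congrArg (· - 1) ((Finset.mem_filter.mp hC).2.card_eq hnd hM)

theorem card_isLagrangian_eq_mul [Finite K] [FiniteDimensional K M] (hB : B.IsAlt)
    (hnd : B.Nondegenerate) {n : ℕ} (hM : finrank K M = 2 * n) {c : M} (hc : c ≠ 0) :
    Nat.card {C // B.IsLagrangian C} =
      (Nat.card K ^ n + 1) * Nat.card {C // B.IsLagrangian C ∧ c ∈ C} := by
  have hn : 0 < n := by
    have : 0 < finrank K M := finrank_pos_iff_exists_ne_zero.mpr ⟨c, hc⟩
    omega
  have hq : 0 < Nat.card K ^ n - 1 :=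
    Nat.sub_pos_of_lt (Nat.one_lt_pow hn.ne' Finite.one_lt_card)
  have h := pow_sub_one_mul_card_isLagrangian_mem hB hnd hM hc
  rw [two_mul, pow_add, mul_self_tsub_one, mul_right_comm] at h
  exact (Nat.eq_of_mul_eq_mul_right hq h).symm

end BilinForm
end LinearMap

section Symp

variable {N : ℕ}

lemma symp_comm (u v : V N) : symp u v = symp v u :=
  Finset.sum_congr rfl fun _ _ => by ring

lemma symp_add_left (u v w : V N) : symp (u + v) w = symp u w + symp v w := by
  simp only [symp, ← Finset.sum_add_distrib, Pi.add_apply, Prod.fst_add, Prod.snd_add]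
  exact Finset.sum_congr rfl fun _ _ => by ring

lemma symp_smul_left (a : ZMod 2) (u v : V N) : symp (a • u) v = a • symp u v := by
  simp only [symp, smul_eq_mul, Finset.mul_sum, Pi.smul_apply, Prod.smul_fst, Prod.smul_snd]
  exact Finset.sum_congr rfl fun _ _ => by ring

lemma symp_self (u : V N) : symp u u = 0 :=
  Finset.sum_eq_zero fun _ _ => by rw [mul_comm]; exact CharTwo.add_self_eq_zero _

lemma single_symp (n : Fin N) (p : ZMod 2 × ZMod 2) (u : V N) :
    symp (Pi.single n p) u = p.1 * (u n).2 + p.2 * (u n).1 := by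
  rw [symp, Finset.sum_eq_single n (fun m _ hm => by simp [Pi.single_eq_of_ne hm]) (by simp)]
  simp

end Symp

def sympForm (N : ℕ) : LinearMap.BilinForm (ZMod 2) (V N) :=
  LinearMap.mk₂ (ZMod 2) symp symp_add_left symp_smul_left
    (fun u v w => by rw [symp_comm, symp_add_left, symp_comm v, symp_comm w])
    (fun a u v => by rw [symp_comm, symp_smul_left, symp_comm])

@[simp] lemma sympForm_apply {N : ℕ} (u v : V N) : sympForm N u v = symp u v := rfl

lemma sympForm_isAlt (N : ℕ) : (sympForm N).IsAlt := symp_self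

lemma sympForm_nondegenerate (N : ℕ) : (sympForm N).Nondegenerate := by
  refine (sympForm_isAlt N).isRefl.nondegenerate_iff_separatingRight.mpr fun u hu => ?_
  funext n
  have h₁ := hu (Pi.single n (1, 0))
  have h₂ := hu (Pi.single n (0, 1))
  simp only [sympForm_apply, single_symp, one_mul, zero_mul, add_zero, zero_add] at h₁ h₂
  ext
  exacts [h₂, h₁]

lemma sympDual_eq_orthogonal {N : ℕ} (C : Submodule (ZMod 2) (V N)) :
    sympDual C = (sympForm N).orthogonal C := by
  ext u
  exact forall₂_congr fun v _ => by rw [sympForm_apply, symp_comm]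

lemma isLagrangian_sympForm_iff {N : ℕ} {C : Submodule (ZMod 2) (V N)} :
    (sympForm N).IsLagrangian C ↔ C = sympDual C := by
  rw [LinearMap.BilinForm.IsLagrangian, sympDual_eq_orthogonal]

lemma finrank_V (N : ℕ) : finrank (ZMod 2) (V N) = 2 * N := by
  rw [finrank_pi_fintype]
  simp [mul_comm]

def horizontalSubspace (N : ℕ) : Submodule (ZMod 2) (V N) :=
  Submodule.pi Set.univ fun _ => (⊤ : Submodule (ZMod 2) (ZMod 2)).prod ⊥

lemma mem_horizontalSubspace {N : ℕ} {u : V N} : u ∈ horizontalSubspace N ↔ ∀ n, (u n).2 = 0 := by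
  simp [horizontalSubspace]

lemma isLagrangian_horizontalSubspace (N : ℕ) :
    (sympForm N).IsLagrangian (horizontalSubspace N) := by
  ext u
  simp only [LinearMap.BilinForm.mem_orthogonal_iff, sympForm_apply, mem_horizontalSubspace]
  constructor
  · intro hu v hv
    exact Finset.sum_eq_zero fun n _ => by simp [hu n, hv n]
  · intro hu n
    simpa [single_symp] using hu (Pi.single n (1, 0)) fun m => by
      by_cases hm : m = n <;> simp [hm]

/-- For any fixed nonzero `c ∈ F_2^{2N}`, a uniformly random symplectic
self-dual subspace `C` of `F_2^{2N}` contains `c` with probability `1/(2^N + 1)`: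
(number of self-dual subspaces containing `c`) / (total number of self-dual subspaces)
`= 1/(2^N + 1)`. -/
theorem stmt4 (N : ℕ) (c : V N) (hc : c ≠ 0) :
    ((Nat.card {C : Submodule (ZMod 2) (V N) // C = sympDual C ∧ c ∈ C} : ℝ)) /
      ((Nat.card {C : Submodule (ZMod 2) (V N) // C = sympDual C} : ℝ)) =
      1 / (2 ^ N + 1) := by
  simp only [← isLagrangian_sympForm_iff]
  have hcount := LinearMap.BilinForm.card_isLagrangian_eq_mul (sympForm_isAlt N)
    (sympForm_nondegenerate N) (finrank_V N) hc
  have hpos : Nat.card {C // (sympForm N).IsLagrangian C} ≠ 0 :=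
    Nat.card_ne_zero.mpr ⟨⟨⟨_, isLagrangian_horizontalSubspace N⟩⟩, inferInstance⟩
  rw [hcount, Nat.card_zmod] at hpos ⊢
  rw [Nat.cast_mul, div_mul_cancel_right₀ (by exact_mod_cast right_ne_zero_of_mul hpos), one_div]
  norm_num
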